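/- Let r ≥ s ≥ 3 with r ≤ 2s − 2, gcd(r,s) > 1, and r ≥ s + s/gcd(r,s) − 1. If Δ : [1, 2s + r − 2] → ℤ is any coloring, then either (i) there exists an r-element zero-sum mod r subset R of [1, 2s + r − 2] with diam(R) ≥ 2s − 2, or (ii) there exist an s-element zero-sum mod s set S₁ and an r-element zero-sum mod r set S₂ in [1, 2s + r − 2] with max(S₁) < min(S₂) and diam(S₁) ≤ diam(S₂). -/
import Mathlib


open Finset

/-- diameter of a finite set of naturals -/
def diam (S : Finset ℕ) : ℕ := (S.max.getD 0) - (S.min.getD 0)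

/-- S is monochromatic under a coloring -/
def Mono {α : Type*} (f : ℕ → α) (S : Finset ℕ) : Prop := ∀ a ∈ S, ∀ b ∈ S, f a = f b

/-- S is zero-sum mod m under an integer coloring -/
def ZeroSum (f : ℕ → ℤ) (m : ℕ) (S : Finset ℕ) : Prop := (m : ℤ) ∣ ∑ x ∈ S, f x

/-- every element of S colored ∞ (= none) -/
def InftyMono (f : ℕ → Option ℤ) (S : Finset ℕ) : Prop := ∀ x ∈ S, f x = none

/-- S consists of ℤ-colored elements and is zero-sum mod m -/
def ZeroSumOpt (f : ℕ → Option ℤ) (m : ℕ) (S : Finset ℕ) : Prop :=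
  (∀ x ∈ S, (f x).isSome) ∧ (m : ℤ) ∣ ∑ x ∈ S, (f x).getD 0


lemma diam_spec (S : Finset ℕ) (h : S.Nonempty) : diam S = S.max' h - S.min' h := by
  rw [diam, ← Finset.coe_max' h, ← Finset.coe_min' h]; rfl

lemma le_diam (S : Finset ℕ) {a b : ℕ} (ha : a ∈ S) (hb : b ∈ S) : b - a ≤ diam S := by
  have hne : S.Nonempty := ⟨a, ha⟩
  rw [diam_spec S hne]
  have h1 := S.min'_le a ha
  have h2 := S.le_max' b hb
  omega

lemma diam_le_of_subset_Icc (S : Finset ℕ) (a b : ℕ) (h : S ⊆ Finset.Icc a b) :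
    diam S ≤ b - a := by
  rcases S.eq_empty_or_nonempty with rfl | hne
  · have : diam (∅:Finset ℕ) = 0 := rfl
    simp [this]
  · rw [diam_spec S hne]
    have h1 := h (S.min'_mem hne)
    have h2 := h (S.max'_mem hne)
    simp only [Finset.mem_Icc] at h1 h2
    omega

-- Inverse Davenport: if all nonempty proper subsets of an r-element set have nonzero sum
-- in ZMod r, then f is constant on the set.
lemma inverse_davenport {r : ℕ} (hr : 0 < r) (S : Finset ℕ) (hcard : S.card = r)
    (f : ℕ → ZMod r)
    (H : ∀ C ⊆ S, C.Nonempty → C ≠ S → ∑ x ∈ C, f x ≠ 0) :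
    ∀ i ∈ S, ∀ j ∈ S, f i = f j := by
  haveI : NeZero r := ⟨by omega⟩
  intro i hi j hj
  by_cases hij : i = j
  · rw [hij]
  -- A : list of S \ {i,j}
  set S' := S \ {i, j} with hS'
  have hsub : {i, j} ⊆ S := by
    intro x hx; simp only [Finset.mem_insert, Finset.mem_singleton] at hx
    rcases hx with rfl | rfl <;> assumption
  have hcardS' : S'.card = r - 2 := by
    rw [hS', Finset.card_sdiff_of_subset hsub, hcard, Finset.card_insert_of_notMem (by simpa using hij),
      Finset.card_singleton]
  set A := S'.toList with hA
  have hAnd : A.Nodup := Finset.nodup_toList _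
  have hAlen : A.length = r - 2 := by rw [hA, Finset.length_toList, hcardS']
  have hAmem : ∀ x ∈ A, x ∈ S' := by intro x hx; rwa [hA, Finset.mem_toList] at hx
  -- prefix sums
  set ps : ℕ → ZMod r := fun t => ((A.take t).map f).sum with hps
  -- generic slice fact
  have slice_ne : ∀ t₁ t₂ : ℕ, t₁ < t₂ → t₂ ≤ r - 2 → ps t₁ ≠ ps t₂ := by
    intro t₁ t₂ hlt hle heq
    set B := (A.drop t₁).take (t₂ - t₁) with hB
    have htake : A.take t₂ = A.take t₁ ++ B := by
      rw [hB, ← List.take_add]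
      congr 1; omega
    have hBsub : B.Sublist A := ((A.drop t₁).take_sublist _).trans (A.drop_sublist t₁)
    have hBnd : B.Nodup := hAnd.sublist hBsub
    have hBlen : B.length ≠ 0 := by
      rw [hB, List.length_take, List.length_drop, hAlen]; omega
    have hsum : ps t₂ = ps t₁ + (B.map f).sum := by
      rw [hps]; simp only; rw [htake, List.map_append, List.sum_append]
    have hBF : ∑ x ∈ B.toFinset, f x = (B.map f).sum := by
      rw [List.sum_toFinset _ hBnd]
    have : ∑ x ∈ B.toFinset, f x ≠ 0 := by
      apply H
      · intro x hx
        rw [List.mem_toFinset] at hx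
        exact (Finset.mem_sdiff.mp (hAmem x (hBsub.mem hx))).1
      · exact (List.toFinset_nonempty_iff B).mpr (List.ne_nil_of_length_pos (by omega))
      · intro hEq
        have : i ∈ B.toFinset := by rw [hEq]; exact hi
        rw [List.mem_toFinset] at this
        have := Finset.mem_sdiff.mp (hAmem i (hBsub.mem this))
        simp at this
    rw [hBF] at this
    apply this
    rw [heq] at hsum
    have h00 : ps t₂ + (List.map f B).sum = ps t₂ + 0 := by rw [add_zero]; exact hsum.symm
    exact add_left_cancel h00
  have hinj : Set.InjOn ps ↑(Finset.range (r-1)) := by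
    intro t₁ h1 t₂ h2 heq
    simp only [Finset.coe_range, Set.mem_Iio] at h1 h2
    by_contra hne
    rcases lt_or_gt_of_ne hne with h | h
    · exact slice_ne t₁ t₂ h (by omega) heq
    · exact slice_ne t₂ t₁ h (by omega) heq.symm
  set P := (Finset.range (r-1)).image ps with hP
  have hPcard : P.card = r - 1 := by
    rw [hP, Finset.card_image_of_injOn hinj, Finset.card_range]
  set ω := (A.map f).sum with hω
  have key : ∀ x y : ℕ, x ∈ S → y ∈ S → x ≠ y → x ∉ S' → y ∉ S' → ω + f x ∉ P := by
    intro x y hx hy hxy hxS' hyS' hmem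
    rw [hP, Finset.mem_image] at hmem
    obtain ⟨t, ht, hq⟩ := hmem
    rw [Finset.mem_range] at ht
    set D := A.drop t with hD
    have hsplit : A = A.take t ++ D := (List.take_append_drop t A).symm
    have homega : ω = ps t + (D.map f).sum := by
      rw [hω, hps]; simp only
      conv_lhs => rw [hsplit]
      rw [List.map_append, List.sum_append]
    have hDnd : D.Nodup := hAnd.sublist (A.drop_sublist t)
    have hxD : x ∉ D.toFinset := by
      intro hc
      rw [List.mem_toFinset] at hc
      exact hxS' (hAmem x ((A.drop_sublist t).mem hc))
    set C := insert x D.toFinset with hC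
    have hCsum : ∑ z ∈ C, f z = f x + (D.map f).sum := by
      rw [hC, Finset.sum_insert hxD, List.sum_toFinset _ hDnd]
    have : ∑ z ∈ C, f z ≠ 0 := by
      apply H
      · intro z hz
        rw [hC, Finset.mem_insert] at hz
        rcases hz with rfl | hz
        · exact hx
        · rw [List.mem_toFinset] at hz
          exact (Finset.mem_sdiff.mp (hAmem z ((A.drop_sublist t).mem hz))).1
      · exact ⟨x, by rw [hC]; exact Finset.mem_insert_self _ _⟩
      · intro hEq
        have hyC : y ∈ C := by rw [hEq]; exact hy
        rw [hC, Finset.mem_insert] at hyC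
        rcases hyC with rfl | hyC
        · exact hxy rfl
        · rw [List.mem_toFinset] at hyC
          exact hyS' (hAmem y ((A.drop_sublist t).mem hyC))
    apply this
    rw [hCsum]
    have h2 : ps t + (f x + (D.map f).sum) = ps t + 0 := by
      rw [add_zero]
      calc ps t + (f x + (D.map f).sum) = (ps t + (D.map f).sum) + f x := by ring
        _ = ω + f x := by rw [← homega]
        _ = ps t := hq.symm
    exact add_left_cancel h2
  have hiS' : i ∉ S' := by simp [hS']
  have hjS' : j ∉ S' := by simp [hS']
  have hPc : (Finset.univ \ P).card = 1 := by
    rw [Finset.card_sdiff_of_subset (Finset.subset_univ P), Finset.card_univ, ZMod.card, hPcard]; omega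
  obtain ⟨z, hz⟩ := Finset.card_eq_one.mp hPc
  have m1 : ω + f i ∈ Finset.univ \ P := by
    rw [Finset.mem_sdiff]; exact ⟨Finset.mem_univ _, key i j hi hj hij hiS' hjS'⟩
  have m2 : ω + f j ∈ Finset.univ \ P := by
    rw [Finset.mem_sdiff]; exact ⟨Finset.mem_univ _, key j i hj hi (Ne.symm hij) hjS' hiS'⟩
  rw [hz, Finset.mem_singleton] at m1 m2
  exact add_left_cancel (m1.trans m2.symm)

-- Greedy EGZ extraction: from b + a - 1 elements, a ∣ b, extract b elements with sum ≡ 0 mod a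
lemma lemA (a m : ℕ) (ha : 0 < a) (f : ℕ → ℤ) :
    ∀ (S : Finset ℕ), a * m + a - 1 ≤ S.card →
      ∃ T ⊆ S, T.card = a * m ∧ (a:ℤ) ∣ ∑ x ∈ T, f x := by
  induction m with
  | zero => intro S _; exact ⟨∅, Finset.empty_subset _, by simp, by simp⟩
  | succ m ih =>
    intro S hS
    have hexp : a * (m + 1) = a * m + a := by ring
    rw [hexp] at hS ⊢
    obtain ⟨T₁, hT₁S, hT₁card, hT₁sum⟩ :=
      Int.erdos_ginzburg_ziv (n := a) (s := S) f (by omega)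
    obtain ⟨T₂, hT₂S, hT₂card, hT₂sum⟩ := ih (S \ T₁) (by
      rw [Finset.card_sdiff_of_subset hT₁S, hT₁card]
      omega)
    have hdisj : Disjoint T₁ T₂ := by
      apply Finset.disjoint_left.mpr
      intro x hx1 hx2
      exact (Finset.mem_sdiff.mp (hT₂S hx2)).2 hx1
    refine ⟨T₁ ∪ T₂, ?_, ?_, ?_⟩
    · intro x hx
      rcases Finset.mem_union.mp hx with h | h
      · exact hT₁S h
      · exact (Finset.mem_sdiff.mp (hT₂S h)).1
    · rw [Finset.card_union_of_disjoint hdisj, hT₁card, hT₂card]; omega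
    · rw [Finset.sum_union hdisj]
      exact dvd_add hT₁sum hT₂sum

-- mono mod d pool of size s + k - 1 (s = d * k) contains an s-subset zero-sum mod s
lemma lemA' (d k : ℕ) (hd : 0 < d) (f : ℕ → ℤ) (c : ℤ) (S : Finset ℕ)
    (hmono : ∀ x ∈ S, (d:ℤ) ∣ f x - c) (hcard : d * k + k - 1 ≤ S.card) :
    ∃ T ⊆ S, T.card = d * k ∧ ((d * k : ℕ) :ℤ) ∣ ∑ x ∈ T, f x := by
  rcases Nat.eq_zero_or_pos k with rfl | hk
  · exact ⟨∅, Finset.empty_subset _, by simp, by simp⟩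
  set g : ℕ → ℤ := fun x => (f x - c) / d with hg
  obtain ⟨T, hTS, hTcard, hTsum⟩ := lemA k d hk g S (by
    have : k * d = d * k := by ring
    omega)
  rw [mul_comm] at hTcard
  refine ⟨T, hTS, hTcard, ?_⟩
  obtain ⟨e, he⟩ := hTsum
  have hfx : ∀ x ∈ T, f x = c + d * g x := by
    intro x hx
    have hdvd := hmono x (hTS hx)
    have h2 : (d:ℤ) * g x = f x - c := by
      rw [hg]
      exact Int.mul_ediv_cancel' hdvd
    omega
  rw [Finset.sum_congr rfl hfx, Finset.sum_add_distrib, Finset.sum_const, hTcard,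
    ← Finset.mul_sum, he]
  push_cast
  exact ⟨c + e, by ring⟩

lemma E1 (s r : ℕ) (hs : 3 ≤ s) (hsr : s ≤ r) (hr : r ≤ 2*s-2) (Δ : ℕ → ℤ)
    (noi : ∀ R ⊆ Finset.Icc 1 (2*s+r-2), R.card = r → (r:ℤ) ∣ ∑ x ∈ R, Δ x →
      diam R < 2*s-2) :
    (r:ℤ) ∣ ∑ x ∈ Finset.Icc (2*s-1) (2*s+r-2), Δ x := by
  set n := 2*s+r-2 with hn
  set U := Finset.Icc (2*s-1) n with hU
  set P := Finset.Icc 1 (r-1) ∪ U with hP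
  have hUcard : U.card = r := by rw [hU, Nat.card_Icc]; omega
  have hdisj : Disjoint (Finset.Icc 1 (r-1)) U := by
    rw [hU, Finset.disjoint_left]
    intro x hx hx2
    rw [Finset.mem_Icc] at hx hx2
    omega
  have hPcard : P.card = 2*r - 1 := by
    rw [hP, Finset.card_union_of_disjoint hdisj, Nat.card_Icc, hUcard]; omega
  obtain ⟨T, hTP, hTcard, hTsum⟩ :=
    Int.erdos_ginzburg_ziv (n := r) (s := P) Δ (by omega)
  have hPIcc : P ⊆ Finset.Icc 1 n := by
    rw [hP]
    intro x hx
    rcases Finset.mem_union.mp hx with h | h <;> rw [Finset.mem_Icc] at * <;> omega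
  have hTne : T.Nonempty := by
    rw [← Finset.card_pos, hTcard]; omega
  have hdiam := noi T (hTP.trans hPIcc) hTcard hTsum
  rw [diam_spec T hTne] at hdiam
  set ℓ := T.min' hTne with hℓ
  have hℓmem : ℓ ∈ P := hTP (T.min'_mem hTne)
  have hℓ1 : 1 ≤ ℓ := by
    have := hPIcc hℓmem; rw [Finset.mem_Icc] at this; omega
  have hTeq : T = U := by
    by_cases hcase : ℓ ≤ r - 1
    · exfalso
      have hsub : T ⊆ Finset.Icc ℓ (r-1) ∪ Finset.Icc (2*s-1) (ℓ + 2*s - 3) := by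
        intro x hx
        have hxℓ : ℓ ≤ x := T.min'_le x hx
        have hxmax : x ≤ T.max' hTne := T.le_max' x hx
        have hmaxℓ : ℓ ≤ T.max' hTne := T.min'_le _ (T.max'_mem hTne)
        have hxub : x ≤ ℓ + 2*s - 3 := by omega
        rcases Finset.mem_union.mp (hTP hx) with h | h
        · rw [Finset.mem_Icc] at h
          exact Finset.mem_union_left _ (Finset.mem_Icc.mpr ⟨hxℓ, h.2⟩)
        · rw [hU, Finset.mem_Icc] at h
          exact Finset.mem_union_right _ (Finset.mem_Icc.mpr ⟨h.1, hxub⟩)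
      have hcard2 := Finset.card_le_card hsub
      have hcard3 := Finset.card_union_le (Finset.Icc ℓ (r-1)) (Finset.Icc (2*s-1) (ℓ + 2*s - 3))
      rw [hTcard] at hcard2
      rw [Nat.card_Icc, Nat.card_Icc] at hcard3
      omega
    · have hsub : T ⊆ U := by
        intro x hx
        have hxℓ : ℓ ≤ x := T.min'_le x hx
        rcases Finset.mem_union.mp (hTP hx) with h | h
        · rw [Finset.mem_Icc] at h; omega
        · exact h
      exact Finset.eq_of_subset_of_card_le hsub (by omega)
  rwa [hTeq] at hTsum

lemma lows_mono (s r : ℕ) (hs : 3 ≤ s) (hsr : s ≤ r) (hr : r ≤ 2*s-2) (Δ : ℕ → ℤ)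
    (noi : ∀ R ⊆ Finset.Icc 1 (2*s+r-2), R.card = r → (r:ℤ) ∣ ∑ x ∈ R, Δ x →
      diam R < 2*s-2) :
    ∀ x ∈ Finset.Icc 1 r, ((Δ x : ZMod r)) = ((Δ 1 : ZMod r)) := by
  haveI : NeZero r := ⟨by omega⟩
  set n := 2*s+r-2 with hn
  set U := Finset.Icc (2*s-1) n with hU
  set F : ℕ → ZMod r := fun z => ((Δ z : ℤ) : ZMod r) with hF
  have hUcard : U.card = r := by rw [hU, Nat.card_Icc]; omega
  have hLcard : (Finset.Icc 1 r).card = r := by rw [Nat.card_Icc]; omega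
  have e1 : ∑ u ∈ U, F u = 0 := by
    have h := E1 s r hs hsr hr Δ noi
    have h2 : ((∑ x ∈ U, Δ x : ℤ) : ZMod r) = ∑ x ∈ U, F x := by push_cast; rfl
    rw [← h2, ZMod.intCast_zmod_eq_zero_iff_dvd]
    exact h
  -- key: for any valid pairing σ, the delta function is constant
  have key : ∀ σ : ℕ → ℕ, (∀ z ∈ Finset.Icc 1 r, σ z ∈ U) →
      (Set.InjOn σ ↑(Finset.Icc 1 r)) → σ 1 = n →
      ∀ x ∈ Finset.Icc 1 r, F (σ x) - F x = F n - F 1 := by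
    intro σ hσU hσinj hσ1
    have hID := inverse_davenport (r := r) (by omega) (Finset.Icc 1 r) hLcard
      (fun z => F (σ z) - F z) ?_
    · intro x hx
      have h1r : (1:ℕ) ∈ Finset.Icc 1 r := by rw [Finset.mem_Icc]; omega
      have := hID x hx 1 h1r
      rw [hσ1] at this
      exact this
    · -- H : no nonempty proper subset has zero delta-sum
      intro C hCsub hCne hCneq hsum0
      set D := C.image σ with hD
      have hinjC : Set.InjOn σ ↑C := hσinj.mono (by exact_mod_cast hCsub)
      have hDU : D ⊆ U := by
        intro y hy
        rw [hD, Finset.mem_image] at hy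
        obtain ⟨z, hz, rfl⟩ := hy
        exact hσU z (hCsub hz)
      have hDcard : D.card = C.card := Finset.card_image_of_injOn hinjC
      have hCcard : C.card < r := by
        have hle := Finset.card_le_card hCsub
        rw [hLcard] at hle
        rcases lt_or_eq_of_le hle with h | h
        · exact h
        · exact absurd (Finset.eq_of_subset_of_card_le hCsub (by omega)) hCneq
      set R := (U \ D) ∪ C with hR
      have hUC : Disjoint U C := by
        rw [Finset.disjoint_left]
        intro a haU haC
        have h1 := Finset.mem_Icc.mp (hCsub haC)
        rw [hU, Finset.mem_Icc] at haU
        omega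
      have hdisj : Disjoint (U \ D) C := hUC.mono_left Finset.sdiff_subset
      have hRcard : R.card = r := by
        rw [hR, Finset.card_union_of_disjoint hdisj, Finset.card_sdiff_of_subset hDU, hUcard, hDcard]
        omega
      have hRsub : R ⊆ Finset.Icc 1 n := by
        intro x hx
        rcases Finset.mem_union.mp hx with h | h
        · have := Finset.mem_sdiff.mp h
          rw [hU, Finset.mem_Icc] at this
          rw [Finset.mem_Icc]
          omega
        · have := Finset.mem_Icc.mp (hCsub h)
          rw [Finset.mem_Icc]
          omega
      have hRsum : (r:ℤ) ∣ ∑ x ∈ R, Δ x := by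
        rw [← ZMod.intCast_zmod_eq_zero_iff_dvd]
        have hcast : ((∑ x ∈ R, Δ x : ℤ) : ZMod r) = ∑ x ∈ R, F x := by push_cast; rfl
        rw [hcast, hR, Finset.sum_union hdisj, Finset.sum_sdiff_eq_sub hDU, e1,
          hD, Finset.sum_image (fun x hx y hy h => hinjC hx hy h)]
        have : ∑ x ∈ C, (F (σ x) - F x) = 0 := hsum0
        rw [Finset.sum_sub_distrib] at this
        linear_combination -this
      -- diam R ≥ 2s-2 : contradiction
      have hdiam := noi R hRsub hRcard hRsum
      have hUDne : (U \ D).Nonempty := by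
        rw [← Finset.card_pos, Finset.card_sdiff_of_subset hDU, hUcard, hDcard]
        omega
      obtain ⟨b, hb⟩ := hUDne
      have hbR : b ∈ R := Finset.mem_union_left _ hb
      have hbU : 2*s-1 ≤ b := by
        have := Finset.mem_sdiff.mp hb
        rw [hU, Finset.mem_Icc] at this
        exact this.1.1
      by_cases h1C : 1 ∈ C
      · have h1R : (1:ℕ) ∈ R := Finset.mem_union_right _ h1C
        have := le_diam R h1R hbR
        omega
      · have hnD : n ∉ D := by
          intro hc
          rw [hD, Finset.mem_image] at hc
          obtain ⟨z, hz, hzn⟩ := hc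
          have h1r : (1:ℕ) ∈ Finset.Icc 1 r := by rw [Finset.mem_Icc]; omega
          have : z = 1 := hσinj (by exact_mod_cast hCsub hz) (by exact_mod_cast h1r)
            (by rw [hzn, hσ1])
          rw [this] at hz
          exact h1C hz
        have hnU : n ∈ U := by rw [hU, Finset.mem_Icc]; omega
        have hnR : n ∈ R := Finset.mem_union_left _ (Finset.mem_sdiff.mpr ⟨hnU, hnD⟩)
        obtain ⟨c₀, hc₀⟩ := hCne
        have hc₀R : c₀ ∈ R := Finset.mem_union_right _ hc₀
        have hc₀r : c₀ ≤ r := (Finset.mem_Icc.mp (hCsub hc₀)).2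
        have := le_diam R hc₀R hnR
        omega
  have claim2 : ∀ x ∈ Finset.Icc 2 r, ∀ u ∈ Finset.Icc (2*s-1) (n-1),
      F u - F x = F n - F 1 := by
    intro x hx u hu
    rw [Finset.mem_Icc] at hx hu
    set y := n + 1 - u with hy
    have hyr : 2 ≤ y ∧ y ≤ r := by omega
    set σ : ℕ → ℕ := fun z => n + 1 - (Equiv.swap x y z) with hσ
    have hσval : ∀ z, σ z = n + 1 - (Equiv.swap x y z) := fun z => rfl
    have hswap_mem : ∀ z, 1 ≤ z → z ≤ r → 1 ≤ Equiv.swap x y z ∧ Equiv.swap x y z ≤ r := by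
      intro z hz1 hz2
      rw [Equiv.swap_apply_def]
      split_ifs <;> omega
    have hσU : ∀ z ∈ Finset.Icc 1 r, σ z ∈ U := by
      intro z hz
      rw [Finset.mem_Icc] at hz
      have := hswap_mem z hz.1 hz.2
      rw [hU, Finset.mem_Icc, hσval]
      constructor <;> omega
    have hσinj : Set.InjOn σ ↑(Finset.Icc 1 r) := by
      intro a ha b hb heq
      simp only [Finset.coe_Icc, Set.mem_Icc] at ha hb
      have ha' := hswap_mem a ha.1 ha.2
      have hb' := hswap_mem b hb.1 hb.2
      have heq2 : Equiv.swap x y a = Equiv.swap x y b := by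
        rw [hσval, hσval] at heq
        omega
      exact (Equiv.swap x y).injective heq2
    have hσ1 : σ 1 = n := by
      rw [hσval, Equiv.swap_apply_of_ne_of_ne (by omega) (by omega)]
      omega
    have hx1r : x ∈ Finset.Icc 1 r := by rw [Finset.mem_Icc]; omega
    have hkey := key σ hσU hσinj hσ1 x hx1r
    have hσx : σ x = u := by
      rw [hσval, Equiv.swap_apply_left]
      omega
    rwa [hσx] at hkey
  have hu0 : (2*s-1) ∈ Finset.Icc (2*s-1) (n-1) := by rw [Finset.mem_Icc]; omega
  have hx2 : (2:ℕ) ∈ Finset.Icc 2 r := by rw [Finset.mem_Icc]; omega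
  have hUsplit : U = insert n (Finset.Icc (2*s-1) (n-1)) := by
    rw [hU]
    ext z
    simp only [Finset.mem_Icc, Finset.mem_insert]
    omega
  have hnnotin : n ∉ Finset.Icc (2*s-1) (n-1) := by
    rw [Finset.mem_Icc]; omega
  have hconst : ∀ u ∈ Finset.Icc (2*s-1) (n-1), F u = F 2 + (F n - F 1) := by
    intro u hu
    have := claim2 2 hx2 u hu
    linear_combination this
  have hcard' : (Finset.Icc (2*s-1) (n-1)).card = r - 1 := by
    rw [Nat.card_Icc]; omega
  have hsum2 : ∑ u ∈ Finset.Icc (2*s-1) (n-1), F u = (r-1) • (F 2 + (F n - F 1)) := by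
    rw [Finset.sum_congr rfl hconst, Finset.sum_const, hcard']
  have hcastr : ((r-1 : ℕ) : ZMod r) = -1 := by
    rw [Nat.cast_sub (by omega : 1 ≤ r), ZMod.natCast_self, Nat.cast_one]
    ring
  have hF2 : F 2 = F 1 := by
    rw [hUsplit, Finset.sum_insert hnnotin, hsum2, nsmul_eq_mul, hcastr] at e1
    linear_combination -e1
  intro x hx
  rw [Finset.mem_Icc] at hx
  show F x = F 1
  by_cases hx1 : x = 1
  · rw [hx1]
  · have hxm : x ∈ Finset.Icc 2 r := by rw [Finset.mem_Icc]; omega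
    have h1 := claim2 x hxm (2*s-1) hu0
    have h2 := claim2 2 hx2 (2*s-1) hu0
    have : F x = F 2 := by linear_combination h2 - h1
    rw [this, hF2]

theorem stmt19 (s r : ℕ) (hs : 3 ≤ s) (hsr : s ≤ r) (hr : r ≤ 2 * s - 2)
    (hg : 1 < Nat.gcd r s) (hr2 : s + s / Nat.gcd r s - 1 ≤ r)
    (Δ : ℕ → ℤ) :
    (∃ R : Finset ℕ, R ⊆ Finset.Icc 1 (2 * s + r - 2) ∧ R.card = r ∧
      ZeroSum Δ r R ∧ 2 * s - 2 ≤ diam R) ∨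
    (∃ S₁ S₂ : Finset ℕ, S₁ ⊆ Finset.Icc 1 (2 * s + r - 2) ∧ S₂ ⊆ Finset.Icc 1 (2 * s + r - 2) ∧
      ZeroSum Δ s S₁ ∧ ZeroSum Δ r S₂ ∧ S₁.card = s ∧ S₂.card = r ∧
      (∀ a ∈ S₁, ∀ b ∈ S₂, a < b) ∧ diam S₁ ≤ diam S₂) := by
  by_cases hI : (∃ R : Finset ℕ, R ⊆ Finset.Icc 1 (2 * s + r - 2) ∧ R.card = r ∧
      ZeroSum Δ r R ∧ 2 * s - 2 ≤ diam R)
  · exact Or.inl hI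
  right
  push_neg at hI
  have noi : ∀ R ⊆ Finset.Icc 1 (2*s+r-2), R.card = r → (r:ℤ) ∣ ∑ x ∈ R, Δ x →
      diam R < 2*s-2 := by
    intro R h1 h2 h3
    have := hI R h1 h2 (by exact h3)
    omega
  set d := Nat.gcd r s with hd
  set k := s / d with hk
  have hd2 : 2 ≤ d := hg
  have hds : d ∣ s := Nat.gcd_dvd_right r s
  have hdk : d * k = s := Nat.mul_div_cancel' hds
  have hk1 : 1 ≤ k := by
    rcases Nat.eq_zero_or_pos k with h | h
    · rw [h, Nat.mul_zero] at hdk; omega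
    · exact h
  have hskr : s + k - 1 ≤ r := hr2
  have e1 := E1 s r hs hsr hr Δ noi
  have mono := lows_mono s r hs hsr hr Δ noi
  haveI : NeZero r := ⟨by omega⟩
  have monod : ∀ x ∈ Finset.Icc 1 (s+k-1), (d:ℤ) ∣ Δ x - Δ 1 := by
    intro x hx
    rw [Finset.mem_Icc] at hx
    have hxr : x ∈ Finset.Icc 1 r := by rw [Finset.mem_Icc]; omega
    have hmx := mono x hxr
    have hzero : ((Δ x - Δ 1 : ℤ) : ZMod r) = 0 := by
      push_cast
      rw [hmx]
      ring
    have hrdvd : (r:ℤ) ∣ (Δ x - Δ 1) := (ZMod.intCast_zmod_eq_zero_iff_dvd _ _).mp hzero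
    exact dvd_trans (Int.natCast_dvd_natCast.mpr (Nat.gcd_dvd_left r s)) hrdvd
  obtain ⟨T, hTsub, hTcard, hTsum⟩ := lemA' d k (by omega) Δ (Δ 1)
    (Finset.Icc 1 (s+k-1)) monod (by rw [Nat.card_Icc]; omega)
  refine ⟨T, Finset.Icc (2*s-1) (2*s+r-2), ?_, ?_, ?_, ?_, ?_, ?_, ?_, ?_⟩
  · intro x hx
    have := Finset.mem_Icc.mp (hTsub hx)
    rw [Finset.mem_Icc]
    omega
  · intro x hx
    rw [Finset.mem_Icc] at *
    omega
  · show (s:ℤ) ∣ ∑ x ∈ T, Δ x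
    have hcast : ((d*k : ℕ):ℤ) = (s:ℤ) := by rw [hdk]
    rwa [hcast] at hTsum
  · exact e1
  · rw [hTcard, hdk]
  · rw [Nat.card_Icc]; omega
  · intro a ha b hb
    have h1 := Finset.mem_Icc.mp (hTsub ha)
    have h2 := Finset.mem_Icc.mp hb
    omega
  · have hdT : diam T ≤ s + k - 2 := by
      have := diam_le_of_subset_Icc T 1 (s+k-1) hTsub
      omega
    have hdS : r - 1 ≤ diam (Finset.Icc (2*s-1) (2*s+r-2)) := by
      have hmem1 : 2*s-1 ∈ Finset.Icc (2*s-1) (2*s+r-2) := by rw [Finset.mem_Icc]; omega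
      have hmem2 : 2*s+r-2 ∈ Finset.Icc (2*s-1) (2*s+r-2) := by rw [Finset.mem_Icc]; omega
      have := le_diam _ hmem1 hmem2
      omega
    omega
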